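/- arXiv:2204.00776 — 3 statements merged into one kernel-verified Lean document; each statement's English description precedes it below -/
import Mathlib

section
/- Let H be a separable Banach space, S a nonempty finite set, and X = H × S. Let (P_{s,t})_{s ≤ t} be a two-parameter family of Markov kernels on X satisfying the Chapman–Kolmogorov relation and the Feller property. Assume that for every t ∈ ℝ there exists a Borel probability measure μ_t on X such that for every x ∈ X and every bounded continuous φ : X → ℝ, ∫_X φ dP_{s,t}(x) → ∫_X φ dμ_t as s → −∞. Then (μ_t)_{t ∈ ℝ} is an evolution system of measures for the family: for all s ≤ t and every bounded continuous φ : X → ℝ, ∫_X P_{s,t}φ dμ_s = ∫_X φ dμ_t. -/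
open MeasureTheory ProbabilityTheory Filter Topology

/-! Fix `x₀` and `s ≤ t`. By the Feller property `P_{s,t}φ` is bounded continuous, so as `r → -∞`,
`∫ P_{s,t}φ dP_{r,s}(x₀) → ∫ P_{s,t}φ dμ_s`. By Chapman–Kolmogorov the same integrals equal
`∫ φ dP_{r,t}(x₀)`, which tend to `∫ φ dμ_t`; uniqueness of limits gives the claim. -/

instance DiscreteMeasurableSpace.toOpensMeasurableSpace {α : Type*} [TopologicalSpace α]
    [MeasurableSpace α] [DiscreteMeasurableSpace α] : OpensMeasurableSpace α :=
  ⟨fun _ _ ↦ MeasurableSet.of_discrete⟩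

namespace ProbabilityTheory.Kernel

variable {α β γ : Type*} [MeasurableSpace α] [MeasurableSpace β] [MeasurableSpace γ]

lemma eq_comp_of_apply_eq_lintegral {κ : Kernel α β} {η : Kernel β γ} {χ : Kernel α γ}
    (h : ∀ x A, MeasurableSet A → χ x A = ∫⁻ y, η y A ∂κ x) : χ = η ∘ₖ κ := by
  ext x A hA
  rw [comp_apply' _ _ _ hA, h x A hA]

end ProbabilityTheory.Kernel

namespace BoundedContinuousFunction

variable {X Y E : Type*} [TopologicalSpace X] [MeasurableSpace X]
  [TopologicalSpace Y] [MeasurableSpace Y]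
  [NormedAddCommGroup E] [NormedSpace ℝ E]

noncomputable def integralKernel (κ : Kernel X Y) [IsMarkovKernel κ] (φ : Y →ᵇ E)
    (hcont : Continuous fun x ↦ ∫ y, φ y ∂κ x) : X →ᵇ E :=
  ofNormedAddCommGroup (fun x ↦ ∫ y, φ y ∂κ x) hcont ‖φ‖ fun x ↦ by
    simpa using norm_integral_le_of_norm_le_const (μ := κ x) (.of_forall φ.norm_coe_le_norm)

end BoundedContinuousFunction

theorem stmt_1_general
    {H S : Type*}
    [NormedAddCommGroup H]
    [SecondCountableTopology H] [MeasurableSpace H] [BorelSpace H]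
    [Fintype S] [Nonempty S]
    [TopologicalSpace S]
    [MeasurableSpace S] [MeasurableSingletonClass S]
    (P : ℝ → ℝ → Kernel (H × S) (H × S))
    (hMarkov : ∀ s t : ℝ, s ≤ t → IsMarkovKernel (P s t))
    (hCK : ∀ s r t : ℝ, s ≤ r → r ≤ t → ∀ x : H × S, ∀ A : Set (H × S),
      MeasurableSet A → P s t x A = ∫⁻ y, P r t y A ∂(P s r x))
    (hFeller : ∀ s t : ℝ, s ≤ t → ∀ φ : BoundedContinuousFunction (H × S) ℝ,
      Continuous (fun x : H × S => ∫ y, φ y ∂(P s t x)))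
    (μ : ℝ → Measure (H × S))
    (hconv : ∀ t : ℝ, ∀ x : H × S, ∀ φ : BoundedContinuousFunction (H × S) ℝ,
      Tendsto (fun s : ℝ => ∫ y, φ y ∂(P s t x)) atBot
        (nhds (∫ y, φ y ∂(μ t)))) :
    ∀ s t : ℝ, s ≤ t → ∀ φ : BoundedContinuousFunction (H × S) ℝ,
      ∫ x, (∫ y, φ y ∂(P s t x)) ∂(μ s) = ∫ x, φ x ∂(μ t) := by
  intro s t hst φ
  have := hMarkov s t hst
  let ψ := φ.integralKernel (P s t) (hFeller s t hst φ)
  let x₀ : H × S := (0, Classical.arbitrary S)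
  have hψ : ∀ᶠ r in atBot, ∫ z, φ z ∂P r t x₀ = ∫ y, ψ y ∂P r s x₀ := by
    filter_upwards [eventually_le_atBot s] with r hrs
    have := hMarkov r s hrs
    rw [Kernel.eq_comp_of_apply_eq_lintegral (hCK r s t hrs hst),
      Kernel.integral_comp (φ.integrable _)]
    rfl
  exact tendsto_nhds_unique (hconv s x₀ ψ) ((hconv t x₀ φ).congr' hψ)

/-- if P_{s,t}(x) converges weakly as s → −∞ to a measure μ_t not
depending on x, then (μ_t) is an evolution system of measures:
∫ P_{s,t}φ dμ_s = ∫ φ dμ_t for all s ≤ t and bounded continuous φ. -/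
theorem stmt_1
    {H S : Type*}
    [NormedAddCommGroup H] [NormedSpace ℝ H] [CompleteSpace H]
    [SecondCountableTopology H] [MeasurableSpace H] [BorelSpace H]
    [Fintype S] [Nonempty S] [DecidableEq S]
    [TopologicalSpace S] [DiscreteTopology S]
    [MeasurableSpace S] [MeasurableSingletonClass S]
    (P : ℝ → ℝ → Kernel (H × S) (H × S))
    (hMarkov : ∀ s t : ℝ, s ≤ t → IsMarkovKernel (P s t))
    (hCK : ∀ s r t : ℝ, s ≤ r → r ≤ t → ∀ x : H × S, ∀ A : Set (H × S),
      MeasurableSet A → P s t x A = ∫⁻ y, P r t y A ∂(P s r x))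
    (hFeller : ∀ s t : ℝ, s ≤ t → ∀ φ : BoundedContinuousFunction (H × S) ℝ,
      Continuous (fun x : H × S => ∫ y, φ y ∂(P s t x)))
    (μ : ℝ → Measure (H × S)) (hμ : ∀ t, IsProbabilityMeasure (μ t))
    (hconv : ∀ t : ℝ, ∀ x : H × S, ∀ φ : BoundedContinuousFunction (H × S) ℝ,
      Tendsto (fun s : ℝ => ∫ y, φ y ∂(P s t x)) atBot
        (nhds (∫ y, φ y ∂(μ t)))) :
    ∀ s t : ℝ, s ≤ t → ∀ φ : BoundedContinuousFunction (H × S) ℝ,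
      ∫ x, (∫ y, φ y ∂(P s t x)) ∂(μ s) = ∫ x, φ x ∂(μ t) :=
  stmt_1_general P hMarkov hCK hFeller μ hconv
end

section
/- Let H be a separable Banach space, S a nonempty finite set, and X = H × S. Let (P_{s,t})_{s ≤ t} be a two-parameter family of Markov kernels on X satisfying the Chapman–Kolmogorov relation. Assume: (i) for every x ∈ X and η > 0 there exists R > 0 such that P_{s,t}(x)({(u,j) ∈ X : ‖u‖ ≤ R}) > 1 − η for all s ≤ t; (ii) for every t ∈ ℝ, every bounded set B ⊆ H and every η > 0 there exists T > 0 such that d_L^*(P_{s,t}(x₁), P_{s,t}(x₂)) ≤ η for all s ≤ t − T and all x₁, x₂ ∈ B × S. Then for every t ∈ ℝ, every x ∈ X and every η > 0 there exists T > 0 such that d_L^*(P_{s−h,t}(x), P_{s,t}(x)) < η for all s ≤ t − T and all h > 0; in particular, the family (P_{s,t}(x))_{s ≤ t} is Cauchy in the metric d_L^* as s → −∞. -/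
open MeasureTheory ProbabilityTheory Filter Topology

/-- The metric on X = H × S: d_X((u,i),(v,j)) = ‖u − v‖ + (0 if i = j, 1 otherwise). -/
noncomputable def distX {H S : Type*} [NormedAddCommGroup H] [DecidableEq S]
    (x y : H × S) : ℝ :=
  ‖x.1 - y.1‖ + (if x.2 = y.2 then (0 : ℝ) else 1)

/-- The bounded-Lipschitz distance d_L^* between two Borel measures on H × S. -/
noncomputable def dLstar {H S : Type*} [NormedAddCommGroup H] [DecidableEq S]
    [MeasurableSpace H] [MeasurableSpace S]
    (μ ν : Measure (H × S)) : ℝ :=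
  sSup { r : ℝ | ∃ φ : H × S → ℝ,
    (∃ C K : ℝ, 0 ≤ C ∧ 0 ≤ K ∧ C + K ≤ 1 ∧ (∀ x, |φ x| ≤ C) ∧
      ∀ x y, |φ x - φ y| ≤ K * distX x y) ∧
    r = |(∫ x, φ x ∂μ) - ∫ x, φ x ∂ν| }

section aux
set_option linter.unusedSectionVars false
variable {H S : Type*}
    [NormedAddCommGroup H] [NormedSpace ℝ H]
    [SecondCountableTopology H] [MeasurableSpace H] [BorelSpace H]
    [Fintype S] [DecidableEq S]
    [MeasurableSpace S] [MeasurableSingletonClass S]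

lemma phi_measurable {φ : H × S → ℝ} {K : ℝ}
    (hLip : ∀ x y, |φ x - φ y| ≤ K * distX x y) : Measurable φ := by
  apply measurable_from_prod_countable_left
  intro j
  have : LipschitzWith (Real.toNNReal K) (fun u : H => φ (u, j)) := by
    apply LipschitzWith.of_dist_le_mul
    intro u v
    have h := hLip (u, j) (v, j)
    simp only [distX, if_true, add_zero] at h
    rw [Real.dist_eq, dist_eq_norm]
    calc |φ (u, j) - φ (v, j)| ≤ K * ‖u - v‖ := by simpa using h
    _ ≤ Real.toNNReal K * ‖u - v‖ :=
        mul_le_mul_of_nonneg_right (Real.le_coe_toNNReal K) (norm_nonneg _)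
  exact this.continuous.measurable

lemma integrable_of_bdd {φ : H × S → ℝ} {C : ℝ} (hm : Measurable φ)
    (hC : ∀ x, |φ x| ≤ C) (μ : Measure (H × S)) [IsFiniteMeasure μ] :
    Integrable φ μ :=
  Integrable.mono' (integrable_const C) hm.aestronglyMeasurable
    (Filter.Eventually.of_forall fun x => by simpa [Real.norm_eq_abs] using hC x)

/-- Any admissible test value is at most 2. -/
lemma dLstar_elem_le_two (μ ν : Measure (H × S))
    [IsProbabilityMeasure μ] [IsProbabilityMeasure ν] :
    ∀ r ∈ { r : ℝ | ∃ φ : H × S → ℝ,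
      (∃ C K : ℝ, 0 ≤ C ∧ 0 ≤ K ∧ C + K ≤ 1 ∧ (∀ x, |φ x| ≤ C) ∧
        ∀ x y, |φ x - φ y| ≤ K * distX x y) ∧
      r = |(∫ x, φ x ∂μ) - ∫ x, φ x ∂ν| }, r ≤ 2 := by
  rintro r ⟨φ, ⟨C, K, hC0, hK0, hCK, hC, hLip⟩, rfl⟩
  have h1 : |∫ x, φ x ∂μ| ≤ C := by
    have := norm_integral_le_of_norm_le_const (μ := μ) (f := φ) (C := C)
      (Filter.Eventually.of_forall fun x => by simpa [Real.norm_eq_abs] using hC x)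
    simpa [Real.norm_eq_abs] using this
  have h2 : |∫ x, φ x ∂ν| ≤ C := by
    have := norm_integral_le_of_norm_le_const (μ := ν) (f := φ) (C := C)
      (Filter.Eventually.of_forall fun x => by simpa [Real.norm_eq_abs] using hC x)
    simpa [Real.norm_eq_abs] using this
  have : C ≤ 1 := by linarith
  calc |(∫ x, φ x ∂μ) - ∫ x, φ x ∂ν| ≤ |∫ x, φ x ∂μ| + |∫ x, φ x ∂ν| := abs_sub _ _
    _ ≤ 2 := by linarith

lemma abs_sub_integral_le_dLstar (μ ν : Measure (H × S))
    [IsProbabilityMeasure μ] [IsProbabilityMeasure ν]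
    {φ : H × S → ℝ} {C K : ℝ} (hC0 : 0 ≤ C) (hK0 : 0 ≤ K) (hCK : C + K ≤ 1)
    (hC : ∀ x, |φ x| ≤ C) (hLip : ∀ x y, |φ x - φ y| ≤ K * distX x y) :
    |(∫ x, φ x ∂μ) - ∫ x, φ x ∂ν| ≤ dLstar μ ν := by
  apply le_csSup ⟨2, fun r hr => dLstar_elem_le_two μ ν r hr⟩
  exact ⟨φ, ⟨C, K, hC0, hK0, hCK, hC, hLip⟩, rfl⟩

end aux

/-- (P_{s,t}(x))_{s≤t} is d_L^*-Cauchy as s → −∞: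
for every t, x and η > 0 there is T > 0 with
d_L^*(P_{s−h,t}(x), P_{s,t}(x)) < η for all s ≤ t − T and all h > 0. -/
theorem stmt_2
    {H S : Type*}
    [NormedAddCommGroup H] [NormedSpace ℝ H] [CompleteSpace H]
    [SecondCountableTopology H] [MeasurableSpace H] [BorelSpace H]
    [Fintype S] [Nonempty S] [DecidableEq S]
    [MeasurableSpace S] [MeasurableSingletonClass S]
    (P : ℝ → ℝ → Kernel (H × S) (H × S))
    (hMarkov : ∀ s t : ℝ, s ≤ t → IsMarkovKernel (P s t))
    (hCK : ∀ s r t : ℝ, s ≤ r → r ≤ t → ∀ x : H × S, ∀ A : Set (H × S),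
      MeasurableSet A → P s t x A = ∫⁻ y, P r t y A ∂(P s r x))
    (hBound : ∀ x : H × S, ∀ η : ℝ, 0 < η → ∃ R : ℝ, 0 < R ∧
      ∀ s t : ℝ, s ≤ t →
        P s t x {y : H × S | ‖y.1‖ ≤ R} > 1 - ENNReal.ofReal η)
    (hContr : ∀ t : ℝ, ∀ B : Set H, Bornology.IsBounded B → ∀ η : ℝ, 0 < η →
      ∃ T : ℝ, 0 < T ∧ ∀ s : ℝ, s ≤ t - T → ∀ x₁ x₂ : H × S,
        x₁.1 ∈ B → x₂.1 ∈ B → dLstar (P s t x₁) (P s t x₂) ≤ η) :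
    ∀ t : ℝ, ∀ x : H × S, ∀ η : ℝ, 0 < η → ∃ T : ℝ, 0 < T ∧
      ∀ s : ℝ, s ≤ t - T → ∀ h : ℝ, 0 < h →
        dLstar (P (s - h) t x) (P s t x) < η := by
  intro t x η hη
  obtain ⟨R, hRpos, hR⟩ := hBound x (η/8) (by linarith)
  set B : Set H := Metric.closedBall (0:H) (max R ‖x.1‖) with hB
  obtain ⟨T, hTpos, hT⟩ := hContr t B Metric.isBounded_closedBall (η/4) (by linarith)
  refine ⟨T, hTpos, fun s hs h hh => ?_⟩
  have hst : s ≤ t := by linarith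
  have hsh : s - h ≤ s := by linarith
  have hsht : s - h ≤ t := by linarith
  haveI := hMarkov s t hst
  haveI := hMarkov (s-h) s hsh
  haveI := hMarkov (s-h) t hsht
  have hcomp : P (s-h) t x = ((P s t) ∘ₖ (P (s-h) s)) x := by
    ext A hA
    rw [hCK (s-h) s t hsh hst x A hA, Kernel.comp_apply' _ _ _ hA]
  set μ := P (s-h) s x with hμ
  have key : dLstar (P (s-h) t x) (P s t x) ≤ η/2 := by
    rw [dLstar]
    apply Real.sSup_le _ (by linarith)
    rintro r ⟨φ, ⟨C, K, hC0, hK0, hCK1, hCb, hLip⟩, rfl⟩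
    have hφm : Measurable φ := phi_measurable hLip
    have hC1 : C ≤ 1 := by linarith
    set F : H × S → ℝ := fun y => ∫ z, φ z ∂(P s t y) with hF
    have hFsm : StronglyMeasurable F := by
      have : StronglyMeasurable (fun p : (H × S) × (H × S) => φ p.2) :=
        (hφm.comp measurable_snd).stronglyMeasurable
      exact this.integral_kernel_prod_right' (κ := P s t)
    have hFb : ∀ y, |F y| ≤ C := fun y => by
      have := norm_integral_le_of_norm_le_const (μ := P s t y) (f := φ) (C := C)
        (Filter.Eventually.of_forall fun z => by simpa [Real.norm_eq_abs] using hCb z)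
      simpa [Real.norm_eq_abs, hF] using this
    have hint : ∫ z, φ z ∂(P (s-h) t x) = ∫ y, F y ∂μ := by
      rw [hcomp, Kernel.comp_eq_snd_compProd, Kernel.snd_apply,
        integral_map measurable_snd.aemeasurable hφm.aestronglyMeasurable]
      have hInt : Integrable (fun p : (H × S) × (H × S) => φ p.2)
          ((P (s-h) s ⊗ₖ Kernel.prodMkLeft (H × S) (P s t)) x) :=
        Integrable.mono' (integrable_const C)
          (hφm.comp measurable_snd).aestronglyMeasurable
          (Filter.Eventually.of_forall fun p => by
            simpa [Real.norm_eq_abs] using hCb p.2)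
      rw [ProbabilityTheory.integral_compProd hInt]
      simp [hF, Kernel.prodMkLeft_apply]
      rfl
    have hFint : Integrable F μ :=
      Integrable.mono' (integrable_const C) hFsm.aestronglyMeasurable
        (Filter.Eventually.of_forall fun y => by simpa [Real.norm_eq_abs] using hFb y)
    have hsub : (∫ z, φ z ∂(P (s-h) t x)) - ∫ z, φ z ∂(P s t x) = ∫ y, (F y - F x) ∂μ := by
      rw [hint, integral_sub hFint (integrable_const _), integral_const]
      simp
      rfl
    set A : Set (H × S) := {y : H × S | ‖y.1‖ ≤ R} with hA
    have hAm : MeasurableSet A := measurableSet_le measurable_fst.norm measurable_const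
    have hmuA : μ Aᶜ ≤ ENNReal.ofReal (η/8) := by
      have h1 : μ A > 1 - ENNReal.ofReal (η/8) := hR (s-h) s hsh
      rw [prob_compl_eq_one_sub hAm, tsub_le_iff_right]
      by_cases he : ENNReal.ofReal (η/8) ≤ 1
      · calc (1:ENNReal) = (1 - ENNReal.ofReal (η/8)) + ENNReal.ofReal (η/8) :=
            (tsub_add_cancel_of_le he).symm
          _ ≤ ENNReal.ofReal (η/8) + μ A := by
            rw [add_comm]; exact add_le_add_right h1.le _
      · exact le_trans (le_of_not_ge he) le_self_add
    have hbound_on_A : ∀ y ∈ A, ‖F y - F x‖ ≤ η/4 := by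
      intro y hy
      have hyB : y.1 ∈ B := by
        rw [hB, Metric.mem_closedBall, dist_zero_right]
        exact le_trans hy (le_max_left _ _)
      have hxB : x.1 ∈ B := by
        rw [hB, Metric.mem_closedBall, dist_zero_right]
        exact le_max_right _ _
      have h2 := abs_sub_integral_le_dLstar (P s t y) (P s t x) hC0 hK0 hCK1 hCb hLip
      rw [Real.norm_eq_abs]
      exact le_trans h2 (hT s hs y x hyB hxB)
    have split : ∫ y, (F y - F x) ∂μ
        = (∫ y in A, (F y - F x) ∂μ) + ∫ y in Aᶜ, (F y - F x) ∂μ :=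
      (integral_add_compl hAm (hFint.sub (integrable_const _))).symm
    have e1 : ‖∫ y in A, (F y - F x) ∂μ‖ ≤ (η/4) * (μ A).toReal :=
      norm_setIntegral_le_of_norm_le_const (measure_lt_top μ A) hbound_on_A
    have hA1 : (μ A).toReal ≤ 1 := by
      have := prob_le_one (μ := μ) (s := A)
      simpa using ENNReal.toReal_mono ENNReal.one_ne_top this
    have e1' : ‖∫ y in A, (F y - F x) ∂μ‖ ≤ η/4 := by
      refine le_trans e1 ?_
      nlinarith [ENNReal.toReal_nonneg (a := μ A)]
    have e2 : ‖∫ y in Aᶜ, (F y - F x) ∂μ‖ ≤ 2 * (μ Aᶜ).toReal :=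
      norm_setIntegral_le_of_norm_le_const (measure_lt_top μ Aᶜ)
        (fun y _ => by
          rw [Real.norm_eq_abs]
          calc |F y - F x| ≤ |F y| + |F x| := abs_sub _ _
            _ ≤ 2 := by have h3 := hFb y; have h4 := hFb x; linarith)
    have hAc : (μ Aᶜ).toReal ≤ η/8 :=
      ENNReal.toReal_le_of_le_ofReal (by linarith) hmuA
    have e2' : ‖∫ y in Aᶜ, (F y - F x) ∂μ‖ ≤ η/4 := by
      refine le_trans e2 ?_; linarith
    calc |(∫ z, φ z ∂(P (s-h) t x)) - ∫ z, φ z ∂(P s t x)|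
        = |∫ y, (F y - F x) ∂μ| := by rw [hsub]
      _ = |(∫ y in A, (F y - F x) ∂μ) + ∫ y in Aᶜ, (F y - F x) ∂μ| := by rw [← split]
      _ ≤ |∫ y in A, (F y - F x) ∂μ| + |∫ y in Aᶜ, (F y - F x) ∂μ| := abs_add_le _ _
      _ ≤ η/4 + η/4 := by
          have := e1'; have := e2'
          simp only [Real.norm_eq_abs] at *
          linarith
      _ = η/2 := by ring
  linarith
end

section
/- Let X be a Polish space (complete separable metric space) and (Ω, F, P) a probability space. For each n ∈ ℕ let F_n : X × Ω → X be jointly measurable, and let F : X × Ω → X be jointly measurable. Assume: (a) for every bounded continuous φ : X → ℝ, the map x ↦ ∫_Ω φ(F(x,ω)) dP(ω) is continuous on X; (b) for every compact K ⊆ X and every η > 0, sup_{x ∈ K} P({ω : d(F_n(x,ω), F(x,ω)) ≥ η}) → 0 as n → ∞; (c) μ_n, ν_n, μ, ν are Borel probability measures on X such that μ_n → μ weakly, ν_n → ν weakly, and for every n and every bounded continuous φ : X → ℝ, ∫_X (∫_Ω φ(F_n(x,ω)) dP(ω)) dμ_n(x) = ∫_X φ dν_n. Then for every bounded continuous φ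 : X → ℝ, ∫_X (∫_Ω φ(F(x,ω)) dP(ω)) dμ(x) = ∫_X φ dν. -/
open MeasureTheory Filter Topology

open Metric Set
open scoped ENNReal NNReal BoundedContinuousFunction

lemma aux_tight {X : Type*} [MetricSpace X] [CompleteSpace X] [SecondCountableTopology X]
    [MeasurableSpace X] [BorelSpace X]
    (μs : ℕ → Measure X) (μ : Measure X)
    (hμs : ∀ n, IsProbabilityMeasure (μs n)) (hμ : IsProbabilityMeasure μ)
    (h : ∀ f : X →ᵇ ℝ, Tendsto (fun n => ∫ x, f x ∂(μs n)) atTop (𝓝 (∫ x, f x ∂μ)))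
    {ε : ℝ≥0∞} (hε : 0 < ε) :
    ∃ K : Set X, IsCompact K ∧ ∀ n, μs n Kᶜ ≤ ε := by
  haveI := hμ
  haveI := hμs
  have hne : Nonempty X := by
    by_contra hctr
    rw [not_nonempty_iff] at hctr
    have h1 : μ univ = 1 := measure_univ
    rw [show (univ : Set X) = ∅ from eq_empty_of_isEmpty _, measure_empty] at h1
    exact zero_ne_one h1
  -- weak convergence as ProbabilityMeasure
  have hclosed : ∀ C : Set X, IsClosed C →
      (atTop.limsup fun n => μs n C) ≤ μ C := by
    intro C hC
    let Pn : ℕ → ProbabilityMeasure X := fun n => ⟨μs n, hμs n⟩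
    let Pm : ProbabilityMeasure X := ⟨μ, hμ⟩
    have hconv : Tendsto Pn atTop (𝓝 Pm) := by
      rw [ProbabilityMeasure.tendsto_iff_forall_integral_tendsto]
      exact h
    exact ProbabilityMeasure.limsup_measure_closed_le_of_tendsto hconv hC
  -- dense sequence and ball unions
  obtain ⟨u, hu⟩ : ∃ u : ℕ → X, DenseRange u :=
    ⟨TopologicalSpace.denseSeq X, TopologicalSpace.denseRange_denseSeq X⟩
  set U : ℝ → ℕ → Set X := fun r m => ⋃ i ∈ Finset.range m, ball (u i) r with hU
  have hUopen : ∀ r m, IsOpen (U r m) := fun r m => isOpen_biUnion fun i _ => isOpen_ball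
  have hUmono : ∀ r, Monotone (U r) := by
    intro r m m' hmm
    exact biUnion_subset_biUnion_left (fun i hi => Finset.mem_coe.mpr
      (Finset.mem_range.mpr (lt_of_lt_of_le (Finset.mem_range.mp (Finset.mem_coe.mp hi)) hmm)))
  have hUall : ∀ r, 0 < r → (⋃ m, U r m) = univ := by
    intro r hr
    apply eq_univ_of_forall
    intro x
    obtain ⟨i, hi⟩ := (Metric.denseRange_iff.mp hu) x r hr
    exact mem_iUnion.mpr ⟨i + 1, mem_biUnion (Finset.mem_range.mpr (Nat.lt_succ_self i))
      (mem_ball.mpr hi)⟩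
  have hcompl : ∀ (ρ : Measure X), IsProbabilityMeasure ρ → ∀ r : ℝ, 0 < r →
      Tendsto (fun m => ρ (U r m)ᶜ) atTop (𝓝 0) := by
    intro ρ hρ r hr
    haveI := hρ
    have h1 : Tendsto (fun m => ρ (U r m)) atTop (𝓝 (ρ (⋃ m, U r m))) :=
      tendsto_measure_iUnion_atTop (hUmono r)
    rw [hUall r hr, measure_univ] at h1
    have h2 : Tendsto (fun m => (1 : ℝ≥0∞) - ρ (U r m)) atTop (𝓝 (1 - 1)) :=
      ENNReal.Tendsto.sub tendsto_const_nhds h1 (Or.inr ENNReal.one_ne_top)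
    simp only [tsub_self] at h2
    have h3 : (fun m => ρ (U r m)ᶜ) = fun m => (1 : ℝ≥0∞) - ρ (U r m) := by
      funext m
      rw [measure_compl (hUopen r m).measurableSet (measure_ne_top ρ _), measure_univ]
    rwa [h3]
  have key : ∀ r : ℝ, 0 < r → ∀ δ : ℝ≥0∞, 0 < δ → ∃ m, ∀ n, μs n (U r m)ᶜ ≤ δ := by
    intro r hr δ hδ
    obtain ⟨m0, hm0⟩ := ((hcompl μ hμ r hr).eventually_lt_const hδ).exists
    have hlim : atTop.limsup (fun n => μs n (U r m0)ᶜ) ≤ μ (U r m0)ᶜ :=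
      hclosed _ (hUopen r m0).isClosed_compl
    have hev : ∀ᶠ n in atTop, μs n (U r m0)ᶜ < δ :=
      eventually_lt_of_limsup_lt (lt_of_le_of_lt hlim hm0)
    obtain ⟨N, hN⟩ := eventually_atTop.mp hev
    have hn : ∀ n, ∃ m, μs n (U r m)ᶜ < δ := fun n =>
      ((hcompl (μs n) (hμs n) r hr).eventually_lt_const hδ).exists
    choose mf hmf using hn
    refine ⟨max m0 ((Finset.range N).sup mf), fun n => ?_⟩
    rcases lt_or_ge n N with hn' | hn'
    · refine le_trans (measure_mono (compl_subset_compl.mpr (hUmono r ?_))) (hmf n).le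
      exact le_trans (Finset.le_sup (Finset.mem_range.mpr hn')) (le_max_right _ _)
    · exact le_trans (measure_mono (compl_subset_compl.mpr (hUmono r (le_max_left _ _))))
        (hN n hn').le
  have hrk : ∀ k : ℕ, (0:ℝ) < 1/((k:ℝ)+1) := by
    intro k; positivity
  have hδk : ∀ k : ℕ, (0 : ℝ≥0∞) < ε * 2⁻¹ ^ (k+1) := by
    intro k
    exact ENNReal.mul_pos hε.ne' (pow_ne_zero _ (by norm_num))
  choose m hm using fun k : ℕ => key (1/((k:ℝ)+1)) (hrk k) (ε * 2⁻¹ ^ (k+1)) (hδk k)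
  set S : Set X := ⋂ k : ℕ, U (1/((k:ℝ)+1)) (m k) with hS
  refine ⟨closure S, ?_, ?_⟩
  · apply TotallyBounded.isCompact_of_isClosed (TotallyBounded.closure ?_) isClosed_closure
    rw [Metric.totallyBounded_iff]
    intro r hr
    obtain ⟨k, hk⟩ := exists_nat_one_div_lt hr
    refine ⟨u '' {i | i < m k}, (Set.finite_Iio (m k)).image u, ?_⟩
    refine (iInter_subset _ k).trans ?_
    intro x hx
    simp only [hU, mem_iUnion, Finset.mem_range] at hx
    obtain ⟨i, hi, hxi⟩ := hx
    refine mem_iUnion.mpr ⟨u i, mem_iUnion.mpr ⟨⟨i, hi, rfl⟩, ?_⟩⟩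
    exact ball_subset_ball hk.le hxi
  · intro n
    have h1 : (closure S)ᶜ ⊆ ⋃ k : ℕ, (U (1/((k:ℝ)+1)) (m k))ᶜ := by
      refine compl_subset_compl.mpr subset_closure |>.trans ?_
      rw [hS, compl_iInter]
    calc μs n (closure S)ᶜ ≤ ∑' k : ℕ, μs n (U (1/((k:ℝ)+1)) (m k))ᶜ :=
          (measure_mono h1).trans (measure_iUnion_le _)
      _ ≤ ∑' k : ℕ, ε * 2⁻¹ ^ (k+1) := ENNReal.tsum_le_tsum fun k => hm k n
      _ = ε := by
          rw [ENNReal.tsum_mul_left]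
          have : ∑' k : ℕ, (2⁻¹ : ℝ≥0∞) ^ (k+1) = 1 := by
            simp_rw [pow_succ']
            rw [ENNReal.tsum_mul_left, ENNReal.tsum_geometric]
            rw [show (1 : ℝ≥0∞) - 2⁻¹ = 2⁻¹ from ENNReal.one_sub_inv_two]
            exact ENNReal.mul_inv_cancel (by norm_num) (by norm_num)
          rw [this, mul_one]

section Main

variable {X Ω : Type*}
    [MetricSpace X] [CompleteSpace X] [SecondCountableTopology X]
    [MeasurableSpace X] [BorelSpace X]
    [MeasurableSpace Ω] (P : Measure Ω) [IsProbabilityMeasure P]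

/-- core analytic lemma: convergence of the double integrals for functions `f`
that are "uniformly continuous with ≤" -/
lemma aux_core
    (Fn : ℕ → X × Ω → X) (F : X × Ω → X)
    (hFn : ∀ n, Measurable (Fn n)) (hF : Measurable F)
    (ha : ∀ φ : BoundedContinuousFunction X ℝ,
      Continuous (fun x : X => ∫ ω, φ (F (x, ω)) ∂P))
    (hb : ∀ K : Set X, IsCompact K → ∀ η : ℝ, 0 < η →
      Tendsto (fun n : ℕ => ⨆ x ∈ K, P {ω : Ω | η ≤ dist (Fn n (x, ω)) (F (x, ω))})
        atTop (nhds 0))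
    (μn νn : ℕ → Measure X) (μ ν : Measure X)
    (hμn : ∀ n, IsProbabilityMeasure (μn n)) (hνn : ∀ n, IsProbabilityMeasure (νn n))
    (hμ : IsProbabilityMeasure μ) (hν : IsProbabilityMeasure ν)
    (hμconv : ∀ φ : BoundedContinuousFunction X ℝ,
      Tendsto (fun n : ℕ => ∫ x, φ x ∂(μn n)) atTop (nhds (∫ x, φ x ∂μ)))
    (hνconv : ∀ φ : BoundedContinuousFunction X ℝ,
      Tendsto (fun n : ℕ => ∫ x, φ x ∂(νn n)) atTop (nhds (∫ x, φ x ∂ν)))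
    (heq : ∀ n : ℕ, ∀ φ : BoundedContinuousFunction X ℝ,
      ∫ x, (∫ ω, φ (Fn n (x, ω)) ∂P) ∂(μn n) = ∫ x, φ x ∂(νn n))
    (f : X →ᵇ ℝ)
    (hUC : ∀ ε : ℝ, 0 < ε → ∃ η : ℝ, 0 < η ∧ ∀ a b : X, dist a b < η → dist (f a) (f b) ≤ ε) :
    ∫ x, (∫ ω, f (F (x, ω)) ∂P) ∂μ = ∫ x, f x ∂ν := by
  haveI := hμ; haveI := hν; haveI := hμn; haveI := hνn
  -- the function g as a bounded continuous function
  have hgbd : ∀ x : X, ‖∫ ω, f (F (x, ω)) ∂P‖ ≤ ‖f‖ := by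
    intro x
    calc ‖∫ ω, f (F (x, ω)) ∂P‖ ≤ ‖f‖ * (P univ).toReal :=
          norm_integral_le_of_norm_le_const (Eventually.of_forall fun ω => f.norm_coe_le_norm _)
      _ = ‖f‖ := by simp
  set g : X →ᵇ ℝ := BoundedContinuousFunction.ofNormedAddCommGroup _ (ha f) ‖f‖ hgbd with hgdef
  have hgcoe : ∀ x, g x = ∫ ω, f (F (x, ω)) ∂P := fun x => rfl
  -- measurability and integrability facts
  have hmFn : ∀ n x, Measurable (fun ω => Fn n (x, ω)) := fun n x =>
    (hFn n).comp measurable_prodMk_left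
  have hmF : ∀ x, Measurable (fun ω => F (x, ω)) := fun x => hF.comp measurable_prodMk_left
  have hint : ∀ (G : Ω → X), Measurable G → Integrable (fun ω => f (G ω)) P := by
    intro G hG
    refine ⟨(f.continuous.measurable.comp hG).aestronglyMeasurable, ?_⟩
    exact HasFiniteIntegral.of_bounded (C := ‖f‖)
      (Eventually.of_forall fun ω => f.norm_coe_le_norm _)
  -- gn and its properties
  set gn : ℕ → X → ℝ := fun n x => ∫ ω, f (Fn n (x, ω)) ∂P with hgndef
  have hgnsm : ∀ n, StronglyMeasurable (gn n) := by
    intro n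
    exact (f.continuous.measurable.comp (hFn n)).stronglyMeasurable.integral_prod_right'
  have hgnbd : ∀ n x, ‖gn n x‖ ≤ ‖f‖ := by
    intro n x
    calc ‖gn n x‖ ≤ ‖f‖ * (P univ).toReal :=
          norm_integral_le_of_norm_le_const (Eventually.of_forall fun ω => f.norm_coe_le_norm _)
      _ = ‖f‖ := by simp
  have hgnint : ∀ n m, Integrable (gn n) (μn m) := by
    intro n m
    refine ⟨(hgnsm n).aestronglyMeasurable, ?_⟩
    exact HasFiniteIntegral.of_bounded (C := ‖f‖) (Eventually.of_forall fun x => hgnbd n x)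
  -- the difference tends to zero
  set C : ℝ := 2 * ‖f‖ + 1 with hCdef
  have hC : 0 < C := by positivity
  have hdiff : Tendsto (fun n => ∫ x, gn n x ∂(μn n) - ∫ x, g x ∂(μn n)) atTop (𝓝 0) := by
    rw [NormedAddCommGroup.tendsto_nhds_zero]
    intro ε hε
    obtain ⟨η, hη, hηf⟩ := hUC (ε/4) (by positivity)
    obtain ⟨K, hKcomp, hKmeas⟩ := aux_tight μn μ hμn hμ hμconv
      (ε := ENNReal.ofReal (ε/(4*C))) (ENNReal.ofReal_pos.mpr (by positivity))
    -- the sup over K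
    set Sn : ℕ → ℝ≥0∞ := fun n => ⨆ x ∈ K, P {ω : Ω | η ≤ dist (Fn n (x, ω)) (F (x, ω))}
      with hSndef
    have hSnle : ∀ n, Sn n ≤ 1 := by
      intro n
      exact iSup₂_le fun x _ => prob_le_one
    have hSnlim : Tendsto (fun n => (Sn n).toReal) atTop (𝓝 0) := by
      have := hb K hKcomp η hη
      have h0 : (0:ℝ≥0∞).toReal = 0 := rfl
      exact h0 ▸ ((ENNReal.tendsto_toReal (by norm_num)).comp this)
    have hev : ∀ᶠ n in atTop, C * (Sn n).toReal < ε/4 := by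
      have : Tendsto (fun n => C * (Sn n).toReal) atTop (𝓝 (C * 0)) :=
        (tendsto_const_nhds).mul hSnlim
      rw [mul_zero] at this
      exact this.eventually_lt_const (by positivity)
    filter_upwards [hev] with n hevn
    -- pointwise estimate
    have hpt : ∀ x : X, ‖gn n x - g x‖ ≤
        ε/4 + C * (P {ω : Ω | η ≤ dist (Fn n (x, ω)) (F (x, ω))}).toReal := by
      intro x
      set A : Set Ω := {ω : Ω | η ≤ dist (Fn n (x, ω)) (F (x, ω))} with hAdef
      have hAm : MeasurableSet A := measurableSet_le measurable_const
        ((hmFn n x).dist (hmF x))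
      have int1 : Integrable (fun ω => f (Fn n (x, ω))) P := hint _ (hmFn n x)
      have int2 : Integrable (fun ω => f (F (x, ω))) P := hint _ (hmF x)
      have hsub : gn n x - g x = ∫ ω, (f (Fn n (x, ω)) - f (F (x, ω))) ∂P := by
        rw [integral_sub int1 int2]; rfl
      rw [hsub]
      have hd : ∀ ω, ‖f (Fn n (x, ω)) - f (F (x, ω))‖ ≤ C := by
        intro ω
        calc ‖f (Fn n (x, ω)) - f (F (x, ω))‖ ≤ ‖f (Fn n (x, ω))‖ + ‖f (F (x, ω))‖ :=
              norm_sub_le _ _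
          _ ≤ ‖f‖ + ‖f‖ := add_le_add (f.norm_coe_le_norm _) (f.norm_coe_le_norm _)
          _ ≤ C := by rw [hCdef]; linarith
      have intd : Integrable (fun ω => ‖f (Fn n (x, ω)) - f (F (x, ω))‖) P := (int1.sub int2).norm
      calc ‖∫ ω, (f (Fn n (x, ω)) - f (F (x, ω))) ∂P‖
          ≤ ∫ ω, ‖f (Fn n (x, ω)) - f (F (x, ω))‖ ∂P := norm_integral_le_integral_norm _
        _ = (∫ ω in A, ‖f (Fn n (x, ω)) - f (F (x, ω))‖ ∂P)
            + ∫ ω in Aᶜ, ‖f (Fn n (x, ω)) - f (F (x, ω))‖ ∂P :=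
            (integral_add_compl hAm intd).symm
        _ ≤ C * (P A).toReal + ε/4 := by
            gcongr
            · calc (∫ ω in A, ‖f (Fn n (x, ω)) - f (F (x, ω))‖ ∂P)
                  ≤ ∫ _ω in A, C ∂P := by
                    apply setIntegral_mono_on intd.integrableOn ((integrableOn_const_iff).mpr
                      (Or.inr (measure_lt_top _ _))) hAm
                    exact fun ω _ => hd ω
                _ = (P A).toReal • C := setIntegral_const C
                _ = C * (P A).toReal := by rw [smul_eq_mul, mul_comm]
            · calc (∫ ω in Aᶜ, ‖f (Fn n (x, ω)) - f (F (x, ω))‖ ∂P)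
                  ≤ ∫ _ω in Aᶜ, ε/4 ∂P := by
                    apply setIntegral_mono_on intd.integrableOn ((integrableOn_const_iff).mpr
                      (Or.inr (measure_lt_top _ _))) hAm.compl
                    intro ω hω
                    rw [hAdef, mem_compl_iff, mem_setOf_eq, not_le] at hω
                    have := hηf _ _ hω
                    rwa [Real.dist_eq] at this
                _ = (P Aᶜ).toReal • (ε/4) := setIntegral_const _
                _ ≤ ε/4 := by
                    rw [smul_eq_mul]
                    apply mul_le_of_le_one_left (by positivity)
                    exact ENNReal.toReal_le_of_le_ofReal one_pos.le (by simpa using prob_le_one)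
        _ = ε/4 + C * (P A).toReal := by ring
    -- now integrate the pointwise estimate
    have hgint : Integrable (⇑g) (μn n) := g.integrable _
    have hΔint : Integrable (fun x => gn n x - g x) (μn n) := (hgnint n n).sub hgint
    have hnormint : Integrable (fun x => ‖gn n x - g x‖) (μn n) := hΔint.norm
    have hbd2 : ∀ x, ‖gn n x - g x‖ ≤ C := by
      intro x
      have h1 := hgnbd n x
      have h2 : ‖g x‖ ≤ ‖f‖ := by rw [hgcoe x]; exact hgbd x
      calc ‖gn n x - g x‖ ≤ ‖gn n x‖ + ‖g x‖ := norm_sub_le _ _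
        _ ≤ C := by rw [hCdef]; linarith
    have hKm : MeasurableSet K := hKcomp.measurableSet
    have hSntop : Sn n ≠ ⊤ := ((hSnle n).trans_lt ENNReal.one_lt_top).ne
    rw [← integral_sub (hgnint n n) hgint]
    calc ‖∫ x, (gn n x - g x) ∂(μn n)‖
        ≤ ∫ x, ‖gn n x - g x‖ ∂(μn n) := norm_integral_le_integral_norm _
      _ = (∫ x in K, ‖gn n x - g x‖ ∂(μn n)) + ∫ x in Kᶜ, ‖gn n x - g x‖ ∂(μn n) :=
          (integral_add_compl hKm hnormint).symm
      _ ≤ (ε/4 + C * (Sn n).toReal) + ε/4 := by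
          gcongr
          · calc (∫ x in K, ‖gn n x - g x‖ ∂(μn n))
                ≤ ∫ _x in K, (ε/4 + C * (Sn n).toReal) ∂(μn n) := by
                  apply setIntegral_mono_on hnormint.integrableOn ((integrableOn_const_iff).mpr
                    (Or.inr (measure_lt_top _ _))) hKm
                  intro x hx
                  refine (hpt x).trans ?_
                  gcongr
                  · exact le_biSup (fun x => P {ω : Ω | η ≤ dist (Fn n (x, ω)) (F (x, ω))}) hx
              _ = (μn n K).toReal • (ε/4 + C * (Sn n).toReal) := setIntegral_const _
              _ ≤ ε/4 + C * (Sn n).toReal := by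
                  rw [smul_eq_mul]
                  apply mul_le_of_le_one_left (by positivity)
                  exact ENNReal.toReal_le_of_le_ofReal one_pos.le (by simpa using prob_le_one)
          · calc (∫ x in Kᶜ, ‖gn n x - g x‖ ∂(μn n))
                ≤ ∫ _x in Kᶜ, C ∂(μn n) := by
                  apply setIntegral_mono_on hnormint.integrableOn ((integrableOn_const_iff).mpr
                    (Or.inr (measure_lt_top _ _))) hKm.compl
                  exact fun x _ => hbd2 x
              _ = (μn n Kᶜ).toReal • C := setIntegral_const _
              _ ≤ (ε/(4*C)) * C := by
                  rw [smul_eq_mul]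
                  exact mul_le_mul_of_nonneg_right
                    (ENNReal.toReal_le_of_le_ofReal (by positivity) (hKmeas n)) hC.le
              _ = ε/4 := by field_simp
      _ < ε := by linarith
  -- conclude
  have h1 : Tendsto (fun n => ∫ x, gn n x ∂(μn n)) atTop (𝓝 (∫ x, g x ∂μ)) := by
    have := hdiff.add (hμconv g)
    rw [zero_add] at this
    convert this using 2 with n
    ring
  have h2 : Tendsto (fun n => ∫ x, gn n x ∂(μn n)) atTop (𝓝 (∫ x, f x ∂ν)) := by
    have : (fun n => ∫ x, gn n x ∂(μn n)) = fun n => ∫ x, f x ∂(νn n) := by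
      funext n; exact heq n f
    rw [this]; exact hνconv f
  exact tendsto_nhds_unique h1 h2

end Main

/-- one-step limit of evolution systems of measures. If F_n → F in
probability uniformly on compacts, x ↦ ∫ φ(F(x,·)) dP is continuous, μ_n → μ and
ν_n → ν weakly, and ∫∫ φ(F_n(x,ω)) dP dμ_n = ∫ φ dν_n for each n, then
∫∫ φ(F(x,ω)) dP dμ = ∫ φ dν. -/
theorem stmt_7
    {X Ω : Type*}
    [MetricSpace X] [CompleteSpace X] [SecondCountableTopology X]
    [MeasurableSpace X] [BorelSpace X]
    [MeasurableSpace Ω] (P : Measure Ω) [IsProbabilityMeasure P]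
    (Fn : ℕ → X × Ω → X) (F : X × Ω → X)
    (hFn : ∀ n, Measurable (Fn n)) (hF : Measurable F)
    (ha : ∀ φ : BoundedContinuousFunction X ℝ,
      Continuous (fun x : X => ∫ ω, φ (F (x, ω)) ∂P))
    (hb : ∀ K : Set X, IsCompact K → ∀ η : ℝ, 0 < η →
      Tendsto (fun n : ℕ => ⨆ x ∈ K, P {ω : Ω | η ≤ dist (Fn n (x, ω)) (F (x, ω))})
        atTop (nhds 0))
    (μn νn : ℕ → Measure X) (μ ν : Measure X)
    (hμn : ∀ n, IsProbabilityMeasure (μn n)) (hνn : ∀ n, IsProbabilityMeasure (νn n))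
    (hμ : IsProbabilityMeasure μ) (hν : IsProbabilityMeasure ν)
    (hμconv : ∀ φ : BoundedContinuousFunction X ℝ,
      Tendsto (fun n : ℕ => ∫ x, φ x ∂(μn n)) atTop (nhds (∫ x, φ x ∂μ)))
    (hνconv : ∀ φ : BoundedContinuousFunction X ℝ,
      Tendsto (fun n : ℕ => ∫ x, φ x ∂(νn n)) atTop (nhds (∫ x, φ x ∂ν)))
    (heq : ∀ n : ℕ, ∀ φ : BoundedContinuousFunction X ℝ,
      ∫ x, (∫ ω, φ (Fn n (x, ω)) ∂P) ∂(μn n) = ∫ x, φ x ∂(νn n)) :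
    ∀ φ : BoundedContinuousFunction X ℝ,
      ∫ x, (∫ ω, φ (F (x, ω)) ∂P) ∂μ = ∫ x, φ x ∂ν := by
  intro φ
  haveI := hμ; haveI := hν
  -- the pushforward measure
  set ρ : Measure X := (μ.prod P).map F with hρdef
  haveI hρprob : IsProbabilityMeasure ρ := Measure.isProbabilityMeasure_map hF.aemeasurable
  have hintprod : ∀ f : X →ᵇ ℝ, Integrable (fun p : X × Ω => f (F p)) (μ.prod P) := by
    intro f
    refine ⟨(f.continuous.measurable.comp hF).aestronglyMeasurable, ?_⟩
    exact HasFiniteIntegral.of_bounded (C := ‖f‖)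
      (Eventually.of_forall fun p => f.norm_coe_le_norm _)
  have hrep : ∀ f : X →ᵇ ℝ, ∫ y, f y ∂ρ = ∫ x, ∫ ω, f (F (x, ω)) ∂P ∂μ := by
    intro f
    rw [hρdef, integral_map hF.aemeasurable f.continuous.measurable.aestronglyMeasurable]
    exact integral_prod _ (hintprod f)
  have hcore : ∀ f : X →ᵇ ℝ,
      (∀ ε : ℝ, 0 < ε → ∃ η : ℝ, 0 < η ∧ ∀ a b : X, dist a b < η → dist (f a) (f b) ≤ ε) →
      ∫ y, f y ∂ρ = ∫ x, f x ∂ν := by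
    intro f hf
    rw [hrep f]
    exact aux_core P Fn F hFn hF ha hb μn νn μ ν hμn hνn hμ hν hμconv hνconv heq f hf
  -- equality on closed sets
  have hCeq : ∀ C : Set X, IsClosed C → ρ C = ν C := by
    intro C hC
    rcases eq_empty_or_nonempty C with rfl | hCne
    · simp
    have happrox : ∀ k : ℕ, ∃ f : X →ᵇ ℝ,
        ∀ x, f x = max 0 (1 - ((k:ℝ)+1) * infDist x C) := by
      intro k
      have hcont : Continuous fun x : X => max 0 (1 - ((k:ℝ)+1) * infDist x C) :=
        continuous_const.max (continuous_const.sub (continuous_const.mul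
          (continuous_infDist_pt C)))
      refine ⟨BoundedContinuousFunction.ofNormedAddCommGroup _ hcont 1 ?_, fun x => rfl⟩
      intro x
      rw [Real.norm_eq_abs, abs_le]
      constructor
      · have := le_max_left (0:ℝ) (1 - ((k:ℝ)+1) * infDist x C); linarith
      · apply max_le (by norm_num)
        have h1 : (0:ℝ) ≤ infDist x C := infDist_nonneg
        nlinarith
    choose fs hfs using happrox
    have hfsbd : ∀ k x, ‖fs k x‖ ≤ 1 := by
      intro k x
      rw [hfs k x, Real.norm_eq_abs, abs_le]
      constructor
      · have := le_max_left (0:ℝ) (1 - ((k:ℝ)+1) * infDist x C); linarith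
      · apply max_le (by norm_num)
        have h1 : (0:ℝ) ≤ infDist x C := infDist_nonneg
        nlinarith
    have hfsUC : ∀ k, ∀ ε : ℝ, 0 < ε → ∃ η : ℝ, 0 < η ∧
        ∀ a b : X, dist a b < η → dist (fs k a) (fs k b) ≤ ε := by
      intro k ε hε
      refine ⟨ε/((k:ℝ)+1), by positivity, ?_⟩
      intro a b hab
      rw [Real.dist_eq, hfs k a, hfs k b]
      have hinf : |infDist a C - infDist b C| ≤ dist a b := by
        rw [abs_sub_le_iff]
        constructor
        · linarith [infDist_le_infDist_add_dist (x := a) (y := b) (s := C)]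
        · have h2 := infDist_le_infDist_add_dist (x := b) (y := a) (s := C)
          rw [dist_comm b a] at h2
          linarith
      have h3 : |max (1 - ((k:ℝ)+1) * infDist a C) 0 - max (1 - ((k:ℝ)+1) * infDist b C) 0|
          ≤ |(1 - ((k:ℝ)+1) * infDist a C) - (1 - ((k:ℝ)+1) * infDist b C)| :=
        abs_max_sub_max_le_abs _ _ 0
      rw [max_comm (0:ℝ), max_comm (0:ℝ)]
      refine h3.trans ?_
      have h4 : (1 - ((k:ℝ)+1) * infDist a C) - (1 - ((k:ℝ)+1) * infDist b C)
          = ((k:ℝ)+1) * (infDist b C - infDist a C) := by ring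
      rw [h4, abs_mul, abs_of_pos (by positivity : (0:ℝ) < (k:ℝ)+1)]
      have h5 : |infDist b C - infDist a C| ≤ dist a b := by
        rw [abs_sub_comm]; exact hinf
      calc ((k:ℝ)+1) * |infDist b C - infDist a C| ≤ ((k:ℝ)+1) * (ε/((k:ℝ)+1)) := by
            apply mul_le_mul_of_nonneg_left (h5.trans hab.le) (by positivity)
        _ = ε := by field_simp
    have hptlim : ∀ x : X, Tendsto (fun k => fs k x) atTop
        (𝓝 (indicator C (fun _ => (1:ℝ)) x)) := by
      intro x
      by_cases hx : x ∈ C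
      · have : ∀ k, fs k x = 1 := by
          intro k
          rw [hfs k x, infDist_zero_of_mem hx]
          norm_num
        rw [indicator_of_mem hx]
        simp_rw [this]
        exact tendsto_const_nhds
      · have hd : 0 < infDist x C := by
          rcases lt_or_eq_of_le (infDist_nonneg (x := x) (s := C)) with h | h
          · exact h
          · exact absurd (((hC.mem_iff_infDist_zero hCne).mpr h.symm)) hx
        rw [indicator_of_notMem hx]
        apply tendsto_atTop_of_eventually_const (i₀ := ⌈1/infDist x C⌉₊)
        intro k hk
        rw [hfs k x]
        have h6 : 1/infDist x C ≤ (k:ℝ) := le_trans (Nat.le_ceil _) (by exact_mod_cast hk)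
        have h7 : (1:ℝ) ≤ ((k:ℝ)+1) * infDist x C := by
          have h8 : 1/infDist x C * infDist x C ≤ ((k:ℝ)+1) * infDist x C := by
            apply mul_le_mul_of_nonneg_right (by linarith) hd.le
          rwa [one_div, inv_mul_cancel₀ hd.ne'] at h8
        apply max_eq_left
        linarith
    have hdom : ∀ (m : Measure X), IsProbabilityMeasure m →
        Tendsto (fun k => ∫ x, fs k x ∂m) atTop (𝓝 ((m C).toReal)) := by
      intro m hm
      haveI := hm
      have key := tendsto_integral_of_dominated_convergence (μ := m) (bound := fun _ => (1:ℝ))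
        (F := fun k x => fs k x) (f := indicator C (fun _ => (1:ℝ)))
        (fun k => (fs k).continuous.measurable.aestronglyMeasurable)
        (integrable_const 1)
        (fun k => Eventually.of_forall fun x => hfsbd k x)
        (Eventually.of_forall hptlim)
      have hind : ∫ x, indicator C (fun _ => (1:ℝ)) x ∂m = (m C).toReal := by
        simpa [measureReal_def, Pi.one_def] using integral_indicator_one (μ := m) hC.measurableSet
      rwa [hind] at key
    have t1 := hdom ρ hρprob
    have t2 := hdom ν hν
    have heqk : (fun k => ∫ x, fs k x ∂ρ) = fun k => ∫ x, fs k x ∂ν :=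
      funext fun k => hcore (fs k) (hfsUC k)
    rw [heqk] at t1
    have htr : (ρ C).toReal = (ν C).toReal := tendsto_nhds_unique t1 t2
    exact (ENNReal.toReal_eq_toReal_iff' (measure_ne_top ρ C) (measure_ne_top ν C)).mp htr
  have hρν : ρ = ν := by
    apply ext_of_generate_finite {s : Set X | IsClosed s} ?_ isPiSystem_isClosed
      (fun s hs => hCeq s hs) (by simp)
    rw [BorelSpace.measurable_eq (α := X), borel_eq_generateFrom_isClosed]
  rw [← hrep φ, hρν]
end
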